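/- Fix positive integers p, q, N, L and set m = p + q. Let D(k) ∈ ℝ^{L×m} with ℓ-th row [x_ℓ(k)ᵀ u_ℓ(k)ᵀ], λ_1, …, λ_{N-1} > 0, V = blockdiag(D(0), …, D(N−1)), F the block forward-difference matrix, Υ = diag(λ_1 I_m, …, λ_{N-1} I_m), and 𝒜 = VᵀV + FᵀΥF. If 𝒜 is singular, then there exists a nonzero vector η̄ = (η̄_A, η̄_B) ∈ ℝ^p × ℝ^q such that x_ℓ(k)ᵀ η̄_A + u_ℓ(k)ᵀ η̄_B = 0 for every ℓ = 1, …, L and every k = 0, …, N−1; in particular, all data rows [x_ℓ(k)ᵀ u_ℓ(k)ᵀ] lie in a common hyperplane of ℝ^{p+q} and no p + q of them are linearly independent. -/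

import Mathlib

/-!
If `𝒜 v = 0` with `v ≠ 0`, then `0 = vᵀ𝒜v = ‖Vv‖² + ∑ₖ λₖ ‖v(k) − v(k−1)‖²`, and since all
`λₖ > 0` both `Vv = 0` and `Fv = 0`. The second says that `v(k) = η̄` does not depend on `k`,
and then the first says `D(k) η̄ = 0` for every `k`: all data rows are orthogonal to `η̄ ≠ 0`.
Any `p + q` of them therefore form a square matrix with `η̄` in its kernel.
-/

open Matrix

/-- The `(N−1)m × Nm` block forward-difference matrix `F` (here `N = n + 1`):
`(Fη)(k) = η(k) − η(k−1)`. -/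
def Fmat (n m : ℕ) : Matrix (Fin n × Fin m) (Fin (n + 1) × Fin m) ℝ :=
  fun r c =>
    (if c.1 = r.1.succ then (1 : ℝ) else if c.1 = r.1.castSucc then (-1 : ℝ) else 0) *
      (if r.2 = c.2 then (1 : ℝ) else 0)

/-- The block-diagonal weight matrix `Υ = diag(λ_1 I_m, …, λ_{N-1} I_m)`. -/
def Ups (n m : ℕ) (lam : Fin n → ℝ) : Matrix (Fin n × Fin m) (Fin n × Fin m) ℝ :=
  fun r c => if r = c then lam r.1 else 0

/-- The data matrix `D(k) ∈ ℝ^{L×(p+q)}` whose `ℓ`-th row is `[x_ℓ(k)ᵀ u_ℓ(k)ᵀ]`. -/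
def Dmat (p q n L : ℕ) (x : Fin L → Fin (n + 1) → Fin p → ℝ)
    (u : Fin L → Fin (n + 1) → Fin q → ℝ) (k : Fin (n + 1)) :
    Matrix (Fin L) (Fin (p + q)) ℝ :=
  fun ℓ => Fin.append (x ℓ k) (u ℓ k)

/-- The block-diagonal data matrix `V = blockdiag(D(0), …, D(N−1))`. -/
def Vblk (p q n L : ℕ) (x : Fin L → Fin (n + 1) → Fin p → ℝ)
    (u : Fin L → Fin (n + 1) → Fin q → ℝ) :
    Matrix (Fin (n + 1) × Fin L) (Fin (n + 1) × Fin (p + q)) ℝ :=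
  fun r c => if r.1 = c.1 then Dmat p q n L x u r.1 r.2 c.2 else 0

theorem Fin.append_dotProduct_append {R : Type*} [AddCommMonoid R] [Mul R] {p q : ℕ}
    (a c : Fin p → R) (b d : Fin q → R) :
    Fin.append a b ⬝ᵥ Fin.append c d = a ⬝ᵥ c + b ⬝ᵥ d := by
  simp [dotProduct, Fin.sum_univ_add]

theorem Fin.append_eq_zero_iff {M : Type*} [Zero M] {p q : ℕ} (a : Fin p → M) (b : Fin q → M) :
    Fin.append a b = 0 ↔ a = 0 ∧ b = 0 := by
  simp only [funext_iff, Fin.forall_fin_add, Fin.append_left, Fin.append_right, Pi.zero_apply]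

namespace Matrix

variable {R : Type*} [CommRing R] {ι κ α : Type*} [Fintype ι] [Fintype κ] [Fintype α]
  [DecidableEq κ]

theorem dotProduct_mulVec_gram_add_weighted_gram (V : Matrix ι α R) (F : Matrix κ α R)
    (d : κ → R) (v : α → R) :
    v ⬝ᵥ ((Vᵀ * V + Fᵀ * diagonal d * F) *ᵥ v) =
      (V *ᵥ v) ⬝ᵥ (V *ᵥ v) + ∑ r, d r * (F *ᵥ v) r ^ 2 := by
  rw [add_mulVec, dotProduct_add, ← mulVec_mulVec, Matrix.mul_assoc, ← mulVec_mulVec,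
    ← mulVec_mulVec, dotProduct_transpose_mulVec, dotProduct_transpose_mulVec]
  simp only [dotProduct, mulVec_diagonal, sq, mul_assoc]

theorem mulVec_eq_zero_of_gram_add_weighted_gram_mulVec_eq_zero [LinearOrder R]
    [IsStrictOrderedRing R] (V : Matrix ι α R) (F : Matrix κ α R) {d : κ → R}
    (hd : ∀ r, 0 < d r) {v : α → R}
    (hv : (Vᵀ * V + Fᵀ * diagonal d * F) *ᵥ v = 0) : V *ᵥ v = 0 ∧ F *ᵥ v = 0 := by
  have hquad := dotProduct_mulVec_gram_add_weighted_gram V F d v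
  rw [hv, dotProduct_zero] at hquad
  have hV : 0 ≤ (V *ᵥ v) ⬝ᵥ (V *ᵥ v) := Finset.sum_nonneg fun i _ => mul_self_nonneg _
  have hF : ∀ r ∈ Finset.univ, 0 ≤ d r * (F *ᵥ v) r ^ 2 :=
    fun r _ => mul_nonneg (hd r).le (sq_nonneg _)
  have hF' := Finset.sum_nonneg hF
  refine ⟨dotProduct_self_eq_zero.mp (by linarith), funext fun r => ?_⟩
  have hr := (Finset.sum_eq_zero_iff_of_nonneg hF).mp (by linarith) r (Finset.mem_univ r)
  simpa [(hd r).ne'] using hr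

end Matrix

theorem not_linearIndependent_of_forall_dotProduct_eq_zero {K m : Type*} [Field K] [Fintype m]
    [DecidableEq m] (w : m → m → K) {η : m → K} (hη : η ≠ 0) (hw : ∀ i, w i ⬝ᵥ η = 0) :
    ¬ LinearIndependent K w := by
  change ¬ LinearIndependent K (Matrix.of w).row
  rw [Matrix.linearIndependent_rows_iff_isUnit, ← Matrix.mulVec_injective_iff_isUnit]
  exact fun hinj => hη (hinj (funext hw |>.trans (Matrix.mulVec_zero _).symm))

theorem Ups_eq_diagonal (n m : ℕ) (lam : Fin n → ℝ) :
    Ups n m lam = diagonal fun r => lam r.1 := by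
  ext r c
  simp [Ups, diagonal_apply]

theorem Fmat_mulVec_apply {n m : ℕ} (v : Fin (n + 1) × Fin m → ℝ) (k : Fin n) (j : Fin m) :
    (Fmat n m *ᵥ v) (k, j) = v (k.succ, j) - v (k.castSucc, j) := by
  have hne : k.succ ≠ k.castSucc := Fin.castSucc_lt_succ.ne'
  simp only [Fmat, mulVec, dotProduct, Fintype.sum_prod_type, mul_ite, mul_one, mul_zero,
    ite_mul, zero_mul, Finset.sum_ite_eq, Finset.mem_univ, if_true]
  rw [Fintype.sum_eq_add k.succ k.castSucc hne fun c hc => by simp [hc.1, hc.2]]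
  simp [hne.symm, sub_eq_add_neg]

theorem eq_apply_zero_of_Fmat_mulVec_eq_zero {n m : ℕ} {v : Fin (n + 1) × Fin m → ℝ}
    (hv : Fmat n m *ᵥ v = 0) (k : Fin (n + 1)) (j : Fin m) : v (k, j) = v (0, j) := by
  induction k using Fin.induction with
  | zero => rfl
  | succ k ih => rw [← ih, ← sub_eq_zero, ← Fmat_mulVec_apply, hv, Pi.zero_apply]

theorem Vblk_mulVec_apply {p q n L : ℕ} (x : Fin L → Fin (n + 1) → Fin p → ℝ)
    (u : Fin L → Fin (n + 1) → Fin q → ℝ) (v : Fin (n + 1) × Fin (p + q) → ℝ)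
    (k : Fin (n + 1)) (ℓ : Fin L) :
    (Vblk p q n L x u *ᵥ v) (k, ℓ) = Fin.append (x ℓ k) (u ℓ k) ⬝ᵥ fun j => v (k, j) := by
  simp [Vblk, Dmat, mulVec, dotProduct, Fintype.sum_prod_type, ite_mul]

theorem exists_ne_zero_forall_append_dotProduct_eq_zero {p q n L : ℕ}
    {x : Fin L → Fin (n + 1) → Fin p → ℝ} {u : Fin L → Fin (n + 1) → Fin q → ℝ}
    {lam : Fin n → ℝ} (hlam : ∀ k, 0 < lam k)
    (hsing : ¬ IsUnit ((Vblk p q n L x u)ᵀ * Vblk p q n L x u +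
      (Fmat n (p + q))ᵀ * Ups n (p + q) lam * Fmat n (p + q))) :
    ∃ η : Fin (p + q) → ℝ, η ≠ 0 ∧ ∀ ℓ k, Fin.append (x ℓ k) (u ℓ k) ⬝ᵥ η = 0 := by
  obtain ⟨v, hv0, hv⟩ := exists_mulVec_eq_zero_iff.mpr
    (not_ne_iff.mp fun h => hsing ((isUnit_iff_isUnit_det _).mpr h.isUnit))
  rw [Ups_eq_diagonal] at hv
  obtain ⟨hVv, hFv⟩ :=
    mulVec_eq_zero_of_gram_add_weighted_gram_mulVec_eq_zero (Vblk p q n L x u) (Fmat n (p + q))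
      (fun r => hlam r.1) hv
  have hconst := eq_apply_zero_of_Fmat_mulVec_eq_zero hFv
  refine ⟨fun j => v (0, j), fun h => hv0 (funext fun r => ?_), fun ℓ k => ?_⟩
  · exact (hconst r.1 r.2).trans (congrFun h r.2)
  · rw [← funext (hconst k), ← Vblk_mulVec_apply, hVv, Pi.zero_apply]

theorem stmt_15_general (p q n L : ℕ)
    (x : Fin L → Fin (n + 1) → Fin p → ℝ) (u : Fin L → Fin (n + 1) → Fin q → ℝ)
    (lam : Fin n → ℝ) (hlam : ∀ k, 0 < lam k)
    (hsing : ¬ IsUnit ((Vblk p q n L x u)ᵀ * Vblk p q n L x u +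
      (Fmat n (p + q))ᵀ * Ups n (p + q) lam * Fmat n (p + q))) :
    ∃ (ηA : Fin p → ℝ) (ηB : Fin q → ℝ), ¬(ηA = 0 ∧ ηB = 0) ∧
      (∀ (ℓ : Fin L) (k : Fin (n + 1)), x ℓ k ⬝ᵥ ηA + u ℓ k ⬝ᵥ ηB = 0) ∧
      (∀ sel : Fin (p + q) → Fin L × Fin (n + 1),
        ¬ LinearIndependent ℝ
          (fun j => Fin.append (x (sel j).1 (sel j).2) (u (sel j).1 (sel j).2))) := by
  obtain ⟨η, hη, hrow⟩ := exists_ne_zero_forall_append_dotProduct_eq_zero hlam hsing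
  obtain ⟨ηA, ηB, rfl⟩ : ∃ ηA ηB, Fin.append ηA ηB = η := ⟨_, _, Fin.append_castAdd_natAdd⟩
  refine ⟨ηA, ηB, (Fin.append_eq_zero_iff ηA ηB).not.mp hη, fun ℓ k => ?_, fun sel => ?_⟩
  · rw [← Fin.append_dotProduct_append]
    exact hrow ℓ k
  · exact not_linearIndependent_of_forall_dotProduct_eq_zero _ hη fun j => hrow _ _

/-- (Contrapositive core of Theorem 2 of the paper.)  If the normal-equation
matrix `𝒜 = VᵀV + FᵀΥF` (with all `λ_k > 0`) is singular, then there is a nonzero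
`η̄ = (η̄_A, η̄_B) ∈ ℝ^p × ℝ^q` with `x_ℓ(k)ᵀ η̄_A + u_ℓ(k)ᵀ η̄_B = 0` for all `ℓ, k`; in
particular all data rows lie in a common hyperplane and no `p + q` of them are linearly
independent. -/
theorem stmt_15 (p q n L : ℕ) (hp : 0 < p) (hq : 0 < q) (hL : 0 < L)
    (x : Fin L → Fin (n + 1) → Fin p → ℝ) (u : Fin L → Fin (n + 1) → Fin q → ℝ)
    (lam : Fin n → ℝ) (hlam : ∀ k, 0 < lam k)
    (hsing : ¬ IsUnit ((Vblk p q n L x u)ᵀ * Vblk p q n L x u +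
      (Fmat n (p + q))ᵀ * Ups n (p + q) lam * Fmat n (p + q))) :
    ∃ (ηA : Fin p → ℝ) (ηB : Fin q → ℝ), ¬(ηA = 0 ∧ ηB = 0) ∧
      (∀ (ℓ : Fin L) (k : Fin (n + 1)), x ℓ k ⬝ᵥ ηA + u ℓ k ⬝ᵥ ηB = 0) ∧
      (∀ sel : Fin (p + q) → Fin L × Fin (n + 1),
        ¬ LinearIndependent ℝ
          (fun j => Fin.append (x (sel j).1 (sel j).2) (u (sel j).1 (sel j).2))) :=
  stmt_15_general p q n L x u lam hlam hsing
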